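/- arXiv:1806.03970 — 7 statements merged into one kernel-verified Lean document; each statement's English description precedes it below -/
import Mathlib

section
/- For every MV-chain C and every z ∈ C: if z < ¬z then z_σ ≤ z, and if ¬z < z then z ≤ z_σ. (Every totally ordered MV-algebra satisfies the universal sentence asserting z_σ ⊑ z.) -/
/-- An MV-algebra: a commutative monoid `(B, ⊕, 0)` with an involution `¬`
satisfying `¬0 ⊕ x = ¬0` and the Łukasiewicz axiom
`¬(¬x ⊕ y) ⊕ y = ¬(¬y ⊕ x) ⊕ x`. -/
class MVAlgebra (B : Type*) where
  oplus : B → B → B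
  mvneg : B → B
  zero : B
  oplus_assoc : ∀ x y z : B, oplus (oplus x y) z = oplus x (oplus y z)
  oplus_comm : ∀ x y : B, oplus x y = oplus y x
  oplus_zero : ∀ x : B, oplus x zero = x
  mvneg_mvneg : ∀ x : B, mvneg (mvneg x) = x
  oplus_mvneg_zero : ∀ x : B, oplus (mvneg zero) x = mvneg zero
  luk : ∀ x y : B, oplus (mvneg (oplus (mvneg x) y)) y = oplus (mvneg (oplus (mvneg y) x)) x

namespace MVAlgebra

variable {B : Type*} [MVAlgebra B]

/-- `1 := ¬0`. -/
def one : B := mvneg zero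

/-- `x ⊙ y := ¬(¬x ⊕ ¬y)`. -/
def odot (x y : B) : B := mvneg (oplus (mvneg x) (mvneg y))

/-- `x ⊖ y := x ⊙ ¬y`. -/
def ominus (x y : B) : B := odot x (mvneg y)

/-- The natural order: `x ≤ y` iff `¬x ⊕ y = 1`. -/
def mvle (x y : B) : Prop := oplus (mvneg x) y = one

/-- Strict natural order. -/
def mvlt (x y : B) : Prop := mvle x y ∧ x ≠ y

/-- The transformation `x ↦ x_σ = (x ⊙ (x ⊕ x)) ⊕ (x ⊙ x)`. -/
def sigmaEl (x : B) : B := oplus (odot x (oplus x x)) (odot x x)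

end MVAlgebra


namespace MVAlgebra
variable {B : Type*} [MVAlgebra B]

lemma one_oplus' (x : B) : oplus one x = one := oplus_mvneg_zero x

lemma oplus_one' (x : B) : oplus x one = one := by
  rw [oplus_comm]; exact oplus_mvneg_zero x

lemma mvneg_one' : mvneg (one : B) = zero := mvneg_mvneg zero

lemma zero_oplus' (x : B) : oplus zero x = x := by
  rw [oplus_comm]; exact oplus_zero x

lemma neg_oplus_self' (x : B) : oplus (mvneg x) x = one := by
  have h := luk (B := B) one x
  rw [oplus_one', show mvneg (one : B) = zero from mvneg_one', zero_oplus'] at h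
  exact h

end MVAlgebra

open MVAlgebra

/-- in every MV-chain `C` (an MV-algebra with total natural order),
for every `z`: if `z < ¬z` then `z_σ ≤ z`, and if `¬z < z` then `z ≤ z_σ`. -/
theorem mvchain_sigma_sqle {C : Type*} [MVAlgebra C]
    (htotal : ∀ x y : C, mvle x y ∨ mvle y x) (z : C) :
    (mvlt z (mvneg z) → mvle (sigmaEl z) z) ∧
    (mvlt (mvneg z) z → mvle z (sigmaEl z)) := by
  constructor
  · rintro ⟨h, -⟩
    unfold mvle at h ⊢
    have hzz : odot z z = zero := by
      unfold odot; rw [h, mvneg_one']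
    unfold sigmaEl
    rw [hzz, oplus_zero]
    unfold odot
    rw [mvneg_mvneg, oplus_comm (mvneg z), oplus_assoc, neg_oplus_self', oplus_one']
  · rintro ⟨h, -⟩
    unfold mvle at h ⊢
    rw [mvneg_mvneg] at h
    unfold sigmaEl
    have h1 : odot z (oplus z z) = z := by
      unfold odot; rw [h, mvneg_one', oplus_zero, mvneg_mvneg]
    rw [h1, ← oplus_assoc, neg_oplus_self', one_oplus']
end

section
/- For every MV-algebra D and every element c ∈ D, the transformed element c_σ satisfies c_σ ⊑ c. -/
namespace MVAlgebra

variable {B : Type*} [MVAlgebra B]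

/-- An ideal: contains `0`, closed under `⊕`, downward closed for `≤`. -/
def IsIdeal (I : Set B) : Prop :=
  zero ∈ I ∧ (∀ x y : B, x ∈ I → y ∈ I → oplus x y ∈ I) ∧
    (∀ x y : B, y ∈ I → mvle x y → x ∈ I)

/-- A prime ideal: a proper ideal `P` with `x ⊖ y ∈ P` or `y ⊖ x ∈ P` for all `x, y`. -/
def IsPrimeIdeal (P : Set B) : Prop :=
  IsIdeal P ∧ one ∉ P ∧ ∀ x y : B, ominus x y ∈ P ∨ ominus y x ∈ P

/-- `x ⊑ y` iff for every prime ideal `P`: if `¬y ⊖ y ∉ P` then `x ⊖ y ∈ P`,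
and if `y ⊖ ¬y ∉ P` then `y ⊖ x ∈ P`. -/
def sqle (x y : B) : Prop :=
  ∀ P : Set B, IsPrimeIdeal P →
    (ominus (mvneg y) y ∉ P → ominus x y ∈ P) ∧
    (ominus y (mvneg y) ∉ P → ominus y x ∈ P)

end MVAlgebra

open MVAlgebra

namespace MVAlgebraAux

variable {B : Type*} [MVAlgebra B]

lemma oplus_one (x : B) : oplus x one = one := by
  rw [oplus_comm]; exact oplus_mvneg_zero x

lemma one_oplus (x : B) : oplus one x = one := oplus_mvneg_zero x

lemma zero_oplus (x : B) : oplus zero x = x := by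
  rw [oplus_comm]; exact oplus_zero x

lemma mvneg_one : (mvneg (one : B)) = zero := mvneg_mvneg zero

lemma mvneg_oplus_self (x : B) : oplus (mvneg x) x = one := by
  have h := luk x (one : B)
  simp only [oplus_one, mvneg_one, zero_oplus] at h
  exact h.symm

lemma mvle_refl (x : B) : mvle x x := mvneg_oplus_self x

lemma mvle_trans {x y z : B} (h1 : mvle x y) (h2 : mvle y z) : mvle x z := by
  unfold mvle at *
  have hz : oplus (mvneg (oplus (mvneg z) y)) y = z := by
    rw [luk z y, h2, mvneg_one, zero_oplus]
  rw [← hz, ← oplus_assoc, oplus_comm (mvneg x) (mvneg (oplus (mvneg z) y)),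
    oplus_assoc, h1, oplus_one]

lemma odot_le_left (x y : B) : mvle (odot x y) x := by
  unfold mvle odot
  rw [mvneg_mvneg, oplus_assoc, oplus_comm (mvneg y) x, ← oplus_assoc,
    mvneg_oplus_self, one_oplus]

lemma le_oplus_left (x s : B) : mvle x (oplus x s) := by
  unfold mvle
  rw [← oplus_assoc, mvneg_oplus_self, one_oplus]

lemma oplus_mono {x y : B} (h : mvle x y) (z : B) :
    mvle (oplus x z) (oplus y z) := by
  unfold mvle at *
  have hy : oplus (mvneg (oplus (mvneg y) x)) x = y := by
    rw [luk y x, h, mvneg_one, zero_oplus]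
  rw [← hy]
  rw [show oplus (mvneg (oplus x z)) (oplus (oplus (mvneg (oplus (mvneg y) x)) x) z)
    = oplus (mvneg (oplus (mvneg y) x)) (oplus (mvneg (oplus x z)) (oplus x z)) from by
      rw [oplus_assoc, ← oplus_assoc (mvneg (oplus x z)), oplus_comm (mvneg (oplus x z)) (mvneg (oplus (mvneg y) x)), oplus_assoc]]
  rw [mvneg_oplus_self, oplus_one]

lemma resid_eq (x y z : B) : ominus (odot x y) z = ominus x (oplus (mvneg y) z) := by
  unfold ominus odot
  rw [mvneg_mvneg, mvneg_mvneg, mvneg_mvneg, oplus_assoc]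

lemma mvle_iff_ominus (x y : B) : mvle x y ↔ ominus x y = zero := by
  unfold mvle ominus odot
  rw [mvneg_mvneg]
  constructor
  · intro h; rw [h, mvneg_one]
  · intro h
    have h2 := congrArg mvneg h
    rwa [mvneg_mvneg] at h2

lemma resid (x y z : B) : mvle (odot x y) z ↔ mvle x (oplus (mvneg y) z) := by
  rw [mvle_iff_ominus, mvle_iff_ominus, resid_eq]

end MVAlgebraAux

open MVAlgebraAux

/-- for every MV-algebra `D` and every `c ∈ D`, `c_σ ⊑ c`. -/
theorem sigmaEl_sqle {D : Type*} [MVAlgebra D] (c : D) : sqle (sigmaEl c) c := by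
  intro P hP
  obtain ⟨⟨hz, hadd, hdown⟩, hone, hpr⟩ := hP
  constructor
  · intro h
    have hs : ominus c (mvneg c) ∈ P := (hpr (mvneg c) c).resolve_left h
    have hs' : odot c c ∈ P := by
      have he : ominus c (mvneg c) = odot c c := by
        unfold ominus; rw [mvneg_mvneg]
      rwa [he] at hs
    refine hdown _ _ hs' ?_
    -- goal: mvle (ominus (sigmaEl c) c) (odot c c)
    have key : mvle (odot (sigmaEl c) (mvneg c)) (odot c c) := by
      rw [resid, mvneg_mvneg]
      have h1 : mvle (odot c (oplus c c)) c := odot_le_left c (oplus c c)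
      exact oplus_mono h1 (odot c c)
    exact key
  · intro h
    have hu : ominus (mvneg c) c ∈ P := (hpr c (mvneg c)).resolve_left h
    have hu' : mvneg (oplus c c) ∈ P := by
      have he : ominus (mvneg c) c = mvneg (oplus c c) := by
        unfold ominus odot
        rw [mvneg_mvneg]
      rwa [he] at hu
    refine hdown _ _ hu' ?_
    -- goal: mvle (ominus c (sigmaEl c)) (mvneg (oplus c c))
    have key : mvle (odot c (mvneg (sigmaEl c))) (mvneg (oplus c c)) := by
      rw [resid, mvneg_mvneg]
      -- goal: mvle c (oplus (sigmaEl c) (mvneg (oplus c c)))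
      have step1 : mvle c (oplus (mvneg (oplus c c)) (odot c (oplus c c))) :=
        (resid c (oplus c c) (odot c (oplus c c))).mp (mvle_refl _)
      rw [oplus_comm (mvneg (oplus c c))] at step1
      have step2 : mvle (oplus (odot c (oplus c c)) (mvneg (oplus c c)))
          (oplus (oplus (odot c (oplus c c)) (odot c c)) (mvneg (oplus c c))) :=
        oplus_mono (le_oplus_left (odot c (oplus c c)) (odot c c)) (mvneg (oplus c c))
      exact mvle_trans step1 step2
    exact key
end

section
/- In every MV-chain C, the relation defined by x ⊑ y iff ((y < ¬y implies x ≤ y) and (¬y < y implies y ≤ x)) is a partial order on C: it is reflexive, transitive, and antisymmetric. -/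
namespace MVAlgebra

variable {B : Type*} [MVAlgebra B]

lemma mvle_refl (x : B) : mvle x x := by
  have h := luk x (one : B)
  simp only [oplus_one', one_oplus', mvneg_one', zero_oplus'] at h
  exact h.symm

lemma mvle_antisymm {x y : B} (h1 : mvle x y) (h2 : mvle y x) : x = y := by
  have h := luk x y
  rw [h1, h2, mvneg_one', zero_oplus', zero_oplus'] at h
  exact h.symm

lemma eq_oplus_of_mvle {x y : B} (h : mvle x y) :
    y = oplus (mvneg (oplus (mvneg y) x)) x := by
  have hl := luk x y
  rw [h, mvneg_one', zero_oplus'] at hl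
  exact hl

lemma mvle_of_eq_oplus {x z : B} (c : B) (h : z = oplus c x) : mvle x z := by
  unfold mvle
  rw [h, oplus_comm c x, ← oplus_assoc, oplus_comm (mvneg x) x]
  have hx := mvle_refl x
  unfold mvle at hx
  rw [oplus_comm (mvneg x) x] at hx
  rw [hx]
  exact one_oplus' c

lemma mvle_trans {x y z : B} (h1 : mvle x y) (h2 : mvle y z) : mvle x z := by
  obtain hy := eq_oplus_of_mvle h1
  obtain hz := eq_oplus_of_mvle h2
  rw [hy] at hz
  rw [← oplus_assoc] at hz
  exact mvle_of_eq_oplus _ hz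

lemma mvneg_antitone {x y : B} (h : mvle x y) : mvle (mvneg y) (mvneg x) := by
  unfold mvle
  rw [mvneg_mvneg, oplus_comm]
  exact h

end MVAlgebra

open MVAlgebra

/-- In an MV-chain, `x ⊑ y` iff (`y < ¬y` implies `x ≤ y`) and (`¬y < y` implies `y ≤ x`). -/
def chainSqle {C : Type*} [MVAlgebra C] (x y : C) : Prop :=
  (mvlt y (mvneg y) → mvle x y) ∧ (mvlt (mvneg y) y → mvle y x)

/-- in every MV-chain, the relation `⊑` is a partial order:
reflexive, transitive, and antisymmetric. -/
theorem chainSqle_partialOrder {C : Type*} [MVAlgebra C]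
    (htotal : ∀ x y : C, mvle x y ∨ mvle y x) :
    (∀ x : C, chainSqle x x) ∧
    (∀ x y z : C, chainSqle x y → chainSqle y z → chainSqle x z) ∧
    (∀ x y : C, chainSqle x y → chainSqle y x → x = y) := by
  refine ⟨?_, ?_, ?_⟩
  · -- reflexivity
    intro x
    exact ⟨fun _ => mvle_refl x, fun _ => mvle_refl x⟩
  · -- transitivity
    rintro x y z ⟨hxy1, hxy2⟩ ⟨hyz1, hyz2⟩
    constructor
    · intro hz
      have hyz : mvle y z := hyz1 hz
      rcases htotal (mvneg y) y with h | h
      · -- ¬y ≤ y : contradiction with z < ¬z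
        exfalso
        have hzz : mvle (mvneg z) z :=
          mvle_trans (mvle_trans (mvneg_antitone hyz) h) hyz
        exact hz.2 (mvle_antisymm hz.1 hzz)
      · by_cases hy : y = mvneg y
        · exfalso
          have h1 : mvle (mvneg z) (mvneg y) := mvneg_antitone hyz
          rw [← hy] at h1
          have hzz : mvle (mvneg z) z := mvle_trans h1 hyz
          exact hz.2 (mvle_antisymm hz.1 hzz)
        · exact mvle_trans (hxy1 ⟨h, hy⟩) hyz
    · intro hz
      have hzy : mvle z y := hyz2 hz
      rcases htotal y (mvneg y) with h | h
      · -- y ≤ ¬y : contradiction with ¬z < z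
        exfalso
        have hzz : mvle z (mvneg z) :=
          mvle_trans (mvle_trans hzy h) (mvneg_antitone hzy)
        exact hz.2 (mvle_antisymm hz.1 hzz)
      · by_cases hy : mvneg y = y
        · exfalso
          have h1 : mvle (mvneg y) (mvneg z) := mvneg_antitone hzy
          rw [hy] at h1
          have hzz : mvle z (mvneg z) := mvle_trans hzy h1
          exact hz.2 (mvle_antisymm hz.1 hzz)
        · exact mvle_trans hzy (hxy2 ⟨h, hy⟩)
  · -- antisymmetry
    rintro x y ⟨hxy1, hxy2⟩ ⟨hyx1, hyx2⟩
    rcases htotal y (mvneg y) with h | h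
    · by_cases hy : y = mvneg y
      · -- y = ¬y case
        rcases htotal x (mvneg x) with hx | hx
        · by_cases hxx : x = mvneg x
          · rcases htotal x y with hxy | hyx
            · refine mvle_antisymm hxy ?_
              have h1 : mvle (mvneg y) (mvneg x) := mvneg_antitone hxy
              rw [← hy, ← hxx] at h1
              exact h1
            · refine mvle_antisymm ?_ hyx
              have h1 : mvle (mvneg x) (mvneg y) := mvneg_antitone hyx
              rw [← hy, ← hxx] at h1
              exact h1
          · have hyx : mvle y x := hyx1 ⟨hx, hxx⟩
            have h1 : mvle (mvneg x) (mvneg y) := mvneg_antitone hyx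
            rw [← hy] at h1
            exact mvle_antisymm (mvle_trans hx h1) hyx
        · by_cases hxx : mvneg x = x
          · rcases htotal x y with hxy | hyx
            · refine mvle_antisymm hxy ?_
              have h1 : mvle (mvneg y) (mvneg x) := mvneg_antitone hxy
              rw [← hy, hxx] at h1
              exact h1
            · refine mvle_antisymm ?_ hyx
              have h1 : mvle (mvneg x) (mvneg y) := mvneg_antitone hyx
              rw [← hy, hxx] at h1
              exact h1
          · have hxy : mvle x y := hyx2 ⟨hx, hxx⟩
            have h1 : mvle (mvneg y) (mvneg x) := mvneg_antitone hxy
            rw [← hy] at h1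
            exact mvle_antisymm hxy (mvle_trans h1 hx)
      · -- y < ¬y
        have hx : mvle x y := hxy1 ⟨h, hy⟩
        have h1 : mvle (mvneg y) (mvneg x) := mvneg_antitone hx
        have hxn : mvle x (mvneg x) := mvle_trans (mvle_trans hx h) h1
        by_cases hxx : x = mvneg x
        · exfalso
          have h2 : mvle (mvneg y) y := by
            have h3 : mvle (mvneg y) x := by rw [hxx]; exact h1
            exact mvle_trans h3 hx
          exact hy (mvle_antisymm h h2)
        · exact mvle_antisymm hx (hyx1 ⟨hxn, hxx⟩)
    · by_cases hy : mvneg y = y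
      · -- y = ¬y case (symmetric)
        rcases htotal x (mvneg x) with hx | hx
        · by_cases hxx : x = mvneg x
          · rcases htotal x y with hxy | hyx
            · refine mvle_antisymm hxy ?_
              have h1 : mvle (mvneg y) (mvneg x) := mvneg_antitone hxy
              rw [hy, ← hxx] at h1
              exact h1
            · refine mvle_antisymm ?_ hyx
              have h1 : mvle (mvneg x) (mvneg y) := mvneg_antitone hyx
              rw [hy, ← hxx] at h1
              exact h1
          · have hyx : mvle y x := hyx1 ⟨hx, hxx⟩
            have h1 : mvle (mvneg x) (mvneg y) := mvneg_antitone hyx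
            rw [hy] at h1
            exact mvle_antisymm (mvle_trans hx h1) hyx
        · by_cases hxx : mvneg x = x
          · rcases htotal x y with hxy | hyx
            · refine mvle_antisymm hxy ?_
              have h1 : mvle (mvneg y) (mvneg x) := mvneg_antitone hxy
              rw [hy, hxx] at h1
              exact h1
            · refine mvle_antisymm ?_ hyx
              have h1 : mvle (mvneg x) (mvneg y) := mvneg_antitone hyx
              rw [hy, hxx] at h1
              exact h1
          · have hxy : mvle x y := hyx2 ⟨hx, hxx⟩
            have h1 : mvle (mvneg y) (mvneg x) := mvneg_antitone hxy
            rw [hy] at h1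
            exact mvle_antisymm hxy (mvle_trans h1 hx)
      · -- ¬y < y
        have hx : mvle y x := hxy2 ⟨h, hy⟩
        have h1 : mvle (mvneg x) (mvneg y) := mvneg_antitone hx
        have hxn : mvle (mvneg x) x := mvle_trans (mvle_trans h1 h) hx
        by_cases hxx : mvneg x = x
        · exfalso
          have h2 : mvle y (mvneg y) := by
            have h3 : mvle x (mvneg y) := by rw [← hxx]; exact h1
            exact mvle_trans hx h3
          exact hy (mvle_antisymm h h2)
        · exact mvle_antisymm (hyx2 ⟨hxn, hxx⟩) hx
end

section
/- On the real unit interval [0,1], the relation defined by s ⊑ t iff ((t < 1 − t implies s ≤ t) and (t > 1 − t implies t ≤ s)) is a partial order: it is reflexive, transitive, and antisymmetric. -/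
/-- On `[0,1] ⊆ ℝ`, `s ⊑ t` iff (`t < 1 - t` implies `s ≤ t`) and
(`t > 1 - t` implies `t ≤ s`). -/
def realSqle (s t : ℝ) : Prop := (t < 1 - t → s ≤ t) ∧ (t > 1 - t → t ≤ s)

/-- on the real unit interval `[0,1]`, the relation `⊑` is a partial
order: reflexive, transitive, and antisymmetric. -/
theorem realSqle_partialOrder :
    (∀ t ∈ Set.Icc (0:ℝ) 1, realSqle t t) ∧
    (∀ x ∈ Set.Icc (0:ℝ) 1, ∀ y ∈ Set.Icc (0:ℝ) 1, ∀ z ∈ Set.Icc (0:ℝ) 1,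
      realSqle x y → realSqle y z → realSqle x z) ∧
    (∀ x ∈ Set.Icc (0:ℝ) 1, ∀ y ∈ Set.Icc (0:ℝ) 1,
      realSqle x y → realSqle y x → x = y) := by
  refine ⟨?_, ?_, ?_⟩
  · intro t _
    exact ⟨fun _ => le_refl t, fun _ => le_refl t⟩
  · rintro x _ y _ z _ ⟨h1, h2⟩ ⟨h3, h4⟩
    constructor
    · intro hz
      have := h3 hz
      rcases lt_trichotomy y (1 - y) with h | h | h
      · linarith [h1 h]
      · linarith
      · linarith
    · intro hz
      have := h4 hz
      rcases lt_trichotomy y (1 - y) with h | h | h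
      · linarith
      · linarith
      · linarith [h2 h]
  · rintro x _ y _ ⟨h1, h2⟩ ⟨h3, h4⟩
    rcases lt_trichotomy y (1 - y) with h | h | h
    · have hx := h1 h
      have hx' : x < 1 - x := by linarith
      linarith [h3 hx']
    · rcases lt_trichotomy x (1 - x) with h' | h' | h'
      · linarith [h3 h']
      · linarith
      · linarith [h4 h']
    · have hx := h2 h
      have hx' : x > 1 - x := by linarith
      linarith [h4 hx']
end

section
/- Let X be a topological space and f : X → ℝ a continuous function with 0 ≤ f(x) ≤ 1 for all x ∈ X and with finite range. Then there exists n ∈ ℕ such that σ*^[n+1] ∘ f = σ*^[n] ∘ f; i.e., the sequence of iterates f, σ* ∘ f, σ* ∘ σ* ∘ f, … is eventually constant. -/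
/-- The McNaughton function `σ*(x) = min(1, max(0, 3x - 1))`
    `= (x ⊙ (x ⊕ x)) ⊕ (x ⊙ x)` in the standard MV-algebra `[0,1]`. -/
noncomputable def sigmaStar (x : ℝ) : ℝ := min 1 (max 0 (3 * x - 1))

lemma sigmaStar_stab_mono {v : ℝ} {n m : ℕ} (h : sigmaStar^[n + 1] v = sigmaStar^[n] v)
    (hnm : n ≤ m) : sigmaStar^[m + 1] v = sigmaStar^[m] v := by
  induction m, hnm using Nat.le_induction with
  | base => exact h
  | succ m hm ih =>
    have h2 := congrArg sigmaStar ih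
    rw [Function.iterate_succ_apply'] at h2
    rw [Function.iterate_succ_apply', Function.iterate_succ_apply']
    exact h2

lemma sigmaStar_pointwise (v : ℝ) (h0 : 0 ≤ v) (h1 : v ≤ 1) :
    ∃ n, sigmaStar^[n + 1] v = sigmaStar^[n] v := by
  by_cases hv : v = 1 / 2
  · refine ⟨0, ?_⟩
    simp only [Function.iterate_one, Function.iterate_zero, id, hv]
    norm_num [sigmaStar]
  have inv : ∀ n : ℕ, sigmaStar^[n + 1] v = sigmaStar^[n] v ∨
      (0 ≤ sigmaStar^[n] v ∧ sigmaStar^[n] v ≤ 1 ∧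
        sigmaStar^[n] v - 1 / 2 = 3 ^ n * (v - 1 / 2)) := by
    intro n
    induction n with
    | zero =>
      refine Or.inr ⟨?_, ?_, ?_⟩ <;>
        simp only [Function.iterate_zero, id, pow_zero, one_mul] <;> first | exact h0 | exact h1 | rfl
    | succ n ih =>
      rcases ih with h | ⟨hy0, hy1, hy⟩
      · left
        have h2 := congrArg sigmaStar h
        rw [Function.iterate_succ_apply'] at h2
        rw [Function.iterate_succ_apply', Function.iterate_succ_apply']
        exact h2
      · set y := sigmaStar^[n] v with hy_def
        by_cases hc1 : 3 * y - 1 ≤ 0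
        · left
          have hsy : sigmaStar y = 0 := by
            unfold sigmaStar
            rw [max_eq_left hc1, min_eq_right zero_le_one]
          have h1' : sigmaStar^[n + 1] v = 0 := by
            rw [Function.iterate_succ_apply', ← hy_def, hsy]
          rw [Function.iterate_succ_apply', h1']
          unfold sigmaStar
          norm_num
        · by_cases hc2 : 1 ≤ 3 * y - 1
          · left
            have hsy : sigmaStar y = 1 := by
              unfold sigmaStar
              rw [min_eq_left (le_max_of_le_right hc2)]
            have h1' : sigmaStar^[n + 1] v = 1 := by
              rw [Function.iterate_succ_apply', ← hy_def, hsy]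
            rw [Function.iterate_succ_apply', h1']
            unfold sigmaStar
            norm_num
          · right
            push_neg at hc1 hc2
            have hsy : sigmaStar y = 3 * y - 1 := by
              unfold sigmaStar
              rw [max_eq_right hc1.le, min_eq_right hc2.le]
            have h1' : sigmaStar^[n + 1] v = 3 * y - 1 := by
              rw [Function.iterate_succ_apply', ← hy_def, hsy]
            rw [h1']
            refine ⟨hc1.le, hc2.le, ?_⟩
            have : (3 : ℝ) ^ (n + 1) * (v - 1 / 2) = 3 * (3 ^ n * (v - 1 / 2)) := by ring
            rw [this, ← hy]; ring
  have hd : 0 < |v - 1 / 2| := abs_pos.mpr (sub_ne_zero.mpr hv)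
  obtain ⟨n, hn⟩ := pow_unbounded_of_one_lt ((1 / 2) / |v - 1 / 2|) (by norm_num : (1 : ℝ) < 3)
  have hbig : 1 / 2 < 3 ^ n * |v - 1 / 2| := by
    rw [div_lt_iff₀ hd] at hn
    linarith
  refine ⟨n, ?_⟩
  rcases inv n with h | ⟨hy0, hy1, hy⟩
  · exact h
  · exfalso
    have habs : |sigmaStar^[n] v - 1 / 2| = 3 ^ n * |v - 1 / 2| := by
      rw [hy, abs_mul, abs_of_nonneg (by positivity : (0 : ℝ) ≤ (3 : ℝ) ^ n)]
    have hle : |sigmaStar^[n] v - 1 / 2| ≤ 1 / 2 :=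
      abs_le.mpr ⟨by linarith, by linarith⟩
    rw [habs] at hle
    linarith

/-- for a continuous `[0,1]`-valued function `f` with finite range on a
topological space `X`, the sequence of pointwise iterates `f, σ*∘f, σ*∘σ*∘f, …` is
eventually constant. -/
theorem iterates_eventually_constant {X : Type*} [TopologicalSpace X] (f : X → ℝ)
    (hf : Continuous f) (hf01 : ∀ x, 0 ≤ f x ∧ f x ≤ 1) (hfin : (Set.range f).Finite) :
    ∃ n : ℕ, sigmaStar^[n + 1] ∘ f = sigmaStar^[n] ∘ f := by
  classical
  have hstab : ∀ v ∈ hfin.toFinset, ∃ n, sigmaStar^[n + 1] v = sigmaStar^[n] v := by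
    intro v hv
    rw [Set.Finite.mem_toFinset] at hv
    obtain ⟨x, rfl⟩ := hv
    exact sigmaStar_pointwise _ (hf01 x).1 (hf01 x).2
  choose! n hn using hstab
  refine ⟨hfin.toFinset.sup n, funext fun x => ?_⟩
  have hx : f x ∈ hfin.toFinset := by
    rw [Set.Finite.mem_toFinset]; exact Set.mem_range_self x
  exact sigmaStar_stab_mono (hn _ hx) (Finset.le_sup hx)
end

section
/- For every t ∈ [0,1] there exists n ∈ ℕ with σ*^[n](t) ∈ {0, 1/2, 1} (so that σ*^[n+1](t) = σ*^[n](t)); moreover, if t ≠ 1/2 then there exists n ∈ ℕ with σ*^[n](t) ∈ {0, 1}. -/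
lemma sigmaStar_zero : sigmaStar 0 = 0 := by norm_num [sigmaStar]
lemma sigmaStar_one : sigmaStar 1 = 1 := by norm_num [sigmaStar]
lemma sigmaStar_half : sigmaStar (1/2) = 1/2 := by norm_num [sigmaStar]

lemma sigmaStar_of_le (x : ℝ) (h : x ≤ 1/3) : sigmaStar x = 0 := by
  unfold sigmaStar
  rw [max_eq_left (by linarith), min_eq_right (by norm_num)]

lemma sigmaStar_of_ge (x : ℝ) (h : 2/3 ≤ x) : sigmaStar x = 1 := by
  unfold sigmaStar
  rw [max_eq_right (by linarith), min_eq_left (by linarith)]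

lemma sigmaStar_mid (x : ℝ) (h1 : 1/3 < x) (h2 : x < 2/3) : sigmaStar x = 3 * x - 1 := by
  unfold sigmaStar
  rw [max_eq_right (by linarith), min_eq_right (by linarith)]

lemma key (t : ℝ) (ht0 : 0 ≤ t) (ht1 : t ≤ 1) (n : ℕ) :
    (∃ m : ℕ, sigmaStar^[m] t ∈ ({0, 1} : Set ℝ)) ∨
    (0 ≤ sigmaStar^[n] t ∧ sigmaStar^[n] t ≤ 1 ∧
      |sigmaStar^[n] t - 1/2| = 3 ^ n * |t - 1/2|) := by
  induction n with
  | zero => right; simpa using ⟨ht0, ht1⟩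
  | succ n ih =>
    rcases ih with h | ⟨h0, h1, habs⟩
    · left; exact h
    set x := sigmaStar^[n] t with hx
    rcases le_or_gt x (1/3) with hle | hgt
    · left
      exact ⟨n + 1, by rw [Function.iterate_succ_apply', ← hx, sigmaStar_of_le x hle]; left; rfl⟩
    rcases le_or_gt (2/3) x with hge | hlt
    · left
      refine ⟨n + 1, ?_⟩
      rw [Function.iterate_succ_apply', ← hx, sigmaStar_of_ge x hge]
      right; rfl
    right
    rw [Function.iterate_succ_apply', ← hx, sigmaStar_mid x hgt hlt]
    refine ⟨by linarith, by linarith, ?_⟩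
    have : |3 * x - 1 - 1/2| = 3 * |x - 1/2| := by
      rw [show 3 * x - 1 - 1/2 = 3 * (x - 1/2) by ring, abs_mul,
        abs_of_pos (show (0:ℝ) < 3 by norm_num)]
    rw [this, habs, pow_succ]
    ring

/-- for every `t ∈ [0,1]` there is `n` with
`σ*^[n](t) ∈ {0, 1/2, 1}` (so that `σ*^[n+1](t) = σ*^[n](t)`); moreover, if
`t ≠ 1/2` then there is `n` with `σ*^[n](t) ∈ {0, 1}`. -/
theorem iterates_reach_fixpoint (t : ℝ) (ht0 : 0 ≤ t) (ht1 : t ≤ 1) :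
    (∃ n : ℕ, sigmaStar^[n] t ∈ ({0, 1/2, 1} : Set ℝ) ∧
      sigmaStar^[n + 1] t = sigmaStar^[n] t) ∧
    (t ≠ 1/2 → ∃ n : ℕ, sigmaStar^[n] t ∈ ({0, 1} : Set ℝ)) := by
  by_cases ht : t = 1/2
  · subst ht
    refine ⟨⟨0, by simp, ?_⟩, fun h => absurd rfl h⟩
    norm_num [sigmaStar]
  have hreach : ∃ n : ℕ, sigmaStar^[n] t ∈ ({0, 1} : Set ℝ) := by
    have hd : 0 < |t - 1/2| := by
      rw [abs_pos]; intro h; apply ht; linarith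
    obtain ⟨n, hn⟩ := pow_unbounded_of_one_lt ((1/2) / |t - 1/2|) (show (1:ℝ) < 3 by norm_num)
    rcases key t ht0 ht1 n with h | ⟨h0, h1, habs⟩
    · exact h
    exfalso
    have h2 : (1:ℝ)/2 < 3 ^ n * |t - 1/2| := by
      rw [div_lt_iff₀ hd] at hn; linarith
    rw [← habs] at h2
    have : |sigmaStar^[n] t - 1/2| ≤ 1/2 := abs_le.mpr ⟨by linarith, by linarith⟩
    linarith
  refine ⟨?_, fun _ => hreach⟩
  obtain ⟨n, hn⟩ := hreach
  refine ⟨n, ?_, ?_⟩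
  · rcases hn with h | h
    · left; exact h
    · right; right; exact h
  · rw [Function.iterate_succ_apply']
    rcases hn with h | h
    · rw [h, sigmaStar_zero]
    · rw [h]; exact sigmaStar_one
end

section
/- Let X be a topological space and f : X → ℝ a continuous function with values in [0,1] and with finite range. Let C_f be the set of continuous functions g : X → ℝ with range contained in {0,1} such that g ⊑ f pointwise. Then: (I) C_f is nonempty; (II) C_f is a singleton if and only if f(x) ≠ 1/2 for every x ∈ X; and (III) when C_f is a singleton, its unique element equals σ*^[n] ∘ f, where n is the least natural number with σ*^[n+1] ∘ f = σ*^[n] ∘ f. -/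
/-- `g ⊑ f` pointwise: for every `x`, `f x < 1 - f x` implies `g x ≤ f x`, and
`f x > 1 - f x` implies `f x ≤ g x`. -/
def ptSqle {X : Type*} (g f : X → ℝ) : Prop :=
  ∀ x : X, (f x < 1 - f x → g x ≤ f x) ∧ (f x > 1 - f x → f x ≤ g x)

lemma sigmaStar_lt_half {y : ℝ} : sigmaStar y < 1/2 ↔ y < 1/2 := by
  unfold sigmaStar
  rw [min_lt_iff, max_lt_iff]
  constructor
  · rintro (h | ⟨h1, h2⟩) <;> linarith
  · intro h; right; constructor <;> linarith

lemma half_lt_sigmaStar {y : ℝ} : 1/2 < sigmaStar y ↔ 1/2 < y := by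
  unfold sigmaStar
  rw [lt_min_iff, lt_max_iff]
  constructor
  · rintro ⟨h1, (h | h)⟩ <;> linarith
  · intro h; exact ⟨by norm_num, Or.inr (by linarith)⟩

lemma sigmaStar_fixed {y : ℝ} (h : sigmaStar y = y) (hy : y ≠ 1/2) : y = 0 ∨ y = 1 := by
  unfold sigmaStar at h
  rcases le_total (3*y-1) 0 with h1 | h1
  · rw [max_eq_left h1] at h
    norm_num at h
    left; linarith
  · rw [max_eq_right h1] at h
    rcases le_total 1 (3*y-1) with h2 | h2
    · rw [min_eq_left h2] at h; right; linarith
    · rw [min_eq_right h2] at h; exfalso; apply hy; linarith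

lemma iter_lt_half (m : ℕ) {y : ℝ} (h : y < 1/2) : sigmaStar^[m] y < 1/2 := by
  induction m with
  | zero => rw [Function.iterate_zero_apply]; exact h
  | succ m ih => rw [Function.iterate_succ_apply']; exact sigmaStar_lt_half.mpr ih

lemma half_lt_iter (m : ℕ) {y : ℝ} (h : 1/2 < y) : 1/2 < sigmaStar^[m] y := by
  induction m with
  | zero => rw [Function.iterate_zero_apply]; exact h
  | succ m ih => rw [Function.iterate_succ_apply']; exact half_lt_sigmaStar.mpr ih

lemma isOpen_pre_Ici {X : Type*} [TopologicalSpace X] {f : X → ℝ}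
    (hf : Continuous f) (hfin : (Set.range f).Finite) (t : ℝ) :
    IsOpen (f ⁻¹' Set.Ici t) := by
  by_cases hA : ((Set.range f) ∩ Set.Iio t).Nonempty
  · obtain ⟨c, hc, hmax⟩ := Set.exists_max_image _ id (hfin.inter_of_left _) hA
    have heq : f ⁻¹' Set.Ici t = f ⁻¹' Set.Ioi c := by
      ext x
      simp only [Set.mem_preimage, Set.mem_Ici, Set.mem_Ioi]
      constructor
      · intro h; exact lt_of_lt_of_le hc.2 h
      · intro h
        by_contra hlt
        push_neg at hlt
        exact absurd (hmax (f x) ⟨Set.mem_range_self x, hlt⟩) (not_le.2 h)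
    rw [heq]
    exact isOpen_Ioi.preimage hf
  · have heq : f ⁻¹' Set.Ici t = Set.univ := by
      ext x
      simp only [Set.mem_preimage, Set.mem_Ici, Set.mem_univ, iff_true]
      by_contra h
      push_neg at h
      exact hA ⟨f x, Set.mem_range_self x, h⟩
    rw [heq]; exact isOpen_univ

lemma isClosed_pre_Ioi {X : Type*} [TopologicalSpace X] {f : X → ℝ}
    (hf : Continuous f) (hfin : (Set.range f).Finite) (t : ℝ) :
    IsClosed (f ⁻¹' Set.Ioi t) := by
  by_cases hB : ((Set.range f) ∩ Set.Ioi t).Nonempty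
  · obtain ⟨c, hc, hmin⟩ := Set.exists_min_image _ id (hfin.inter_of_left _) hB
    have heq : f ⁻¹' Set.Ioi t = f ⁻¹' Set.Ici c := by
      ext x
      simp only [Set.mem_preimage, Set.mem_Ioi, Set.mem_Ici]
      constructor
      · intro h; exact hmin (f x) ⟨Set.mem_range_self x, h⟩
      · intro h; exact lt_of_lt_of_le hc.2 h
    rw [heq]
    exact isClosed_Ici.preimage hf
  · have heq : f ⁻¹' Set.Ioi t = ∅ := by
      ext x
      simp only [Set.mem_preimage, Set.mem_Ioi, Set.mem_empty_iff_false, iff_false]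
      intro h
      exact hB ⟨f x, Set.mem_range_self x, h⟩
    rw [heq]; exact isClosed_empty

/-- let `f : X → ℝ` be continuous, `[0,1]`-valued, with finite range,
and let `C_f` be the set of continuous `{0,1}`-valued functions `g` with `g ⊑ f`.
Then (I) `C_f` is nonempty; (II) `C_f` is a singleton iff `f` never takes the value
`1/2`; (III) when `C_f` is a singleton, its unique member is `σ*^[n] ∘ f` for `n` the
least natural number with `σ*^[n+1] ∘ f = σ*^[n] ∘ f`. -/
theorem central_approximants {X : Type*} [TopologicalSpace X] (f : X → ℝ)
    (hf : Continuous f) (hf01 : ∀ x, 0 ≤ f x ∧ f x ≤ 1) (hfin : (Set.range f).Finite) :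
    (Set.Nonempty {g : X → ℝ | Continuous g ∧ Set.range g ⊆ ({0, 1} : Set ℝ) ∧ ptSqle g f}) ∧
    ((∃ g : X → ℝ, {g' : X → ℝ | Continuous g' ∧ Set.range g' ⊆ ({0, 1} : Set ℝ) ∧ ptSqle g' f}
        = {g}) ↔ ∀ x : X, f x ≠ 1/2) ∧
    (∀ n : ℕ, IsLeast {m : ℕ | sigmaStar^[m + 1] ∘ f = sigmaStar^[m] ∘ f} n →
      (∃ g : X → ℝ, {g' : X → ℝ | Continuous g' ∧ Set.range g' ⊆ ({0, 1} : Set ℝ) ∧ ptSqle g' f}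
        = {g}) →
      {g' : X → ℝ | Continuous g' ∧ Set.range g' ⊆ ({0, 1} : Set ℝ) ∧ ptSqle g' f}
        = {sigmaStar^[n] ∘ f}) := by
  classical
  set S := {g : X → ℝ | Continuous g ∧ Set.range g ⊆ ({0, 1} : Set ℝ) ∧ ptSqle g f} with hSdef
  set g₀ : X → ℝ := fun x => if 1/2 ≤ f x then 1 else 0 with hg₀def
  -- g₀ is continuous
  have hclopen : IsClopen {x : X | 1/2 ≤ f x} := by
    constructor
    · exact isClosed_Ici.preimage hf
    · exact isOpen_pre_Ici hf hfin _
  have hg₀cont : Continuous g₀ := by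
    apply Continuous.if _ continuous_const continuous_const
    intro a ha
    rw [hclopen.frontier_eq] at ha
    exact absurd ha (Set.notMem_empty a)
  have hg₀mem : g₀ ∈ S := by
    refine ⟨hg₀cont, ?_, ?_⟩
    · rintro y ⟨x, rfl⟩
      by_cases h : 1/2 ≤ f x
      · simp only [hg₀def, if_pos h]; exact Set.mem_insert_of_mem _ rfl
      · simp only [hg₀def, if_neg h]; exact Set.mem_insert _ _
    · intro x
      constructor
      · intro h
        have hx : ¬ 1/2 ≤ f x := by intro hh; linarith
        simp only [hg₀def, if_neg hx]
        exact (hf01 x).1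
      · intro h
        have hx : 1/2 ≤ f x := by linarith
        simp only [hg₀def, if_pos hx]
        exact (hf01 x).2
  -- uniqueness under no-1/2 hypothesis
  have huniq : (∀ x, f x ≠ 1/2) → ∀ g ∈ S, g = g₀ := by
    intro hne g hg
    obtain ⟨hgc, hgr, hgp⟩ := hg
    funext x
    have hmem : g x ∈ ({0, 1} : Set ℝ) := hgr ⟨x, rfl⟩
    simp only [Set.mem_insert_iff, Set.mem_singleton_iff] at hmem
    rcases lt_or_gt_of_ne (hne x) with h | h
    · have hle : g x ≤ f x := (hgp x).1 (by linarith)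
      have hx : ¬ 1/2 ≤ f x := by linarith
      simp only [hg₀def, if_neg hx]
      rcases hmem with h0 | h1
      · exact h0
      · exfalso; rw [h1] at hle; linarith
    · have hge : f x ≤ g x := (hgp x).2 (by linarith)
      have hx : 1/2 ≤ f x := le_of_lt h
      simp only [hg₀def, if_pos hx]
      rcases hmem with h0 | h1
      · exfalso; rw [h0] at hge; linarith
      · exact h1
  have hIff : (∃ g : X → ℝ, S = {g}) ↔ ∀ x : X, f x ≠ 1/2 := by
    constructor
    · rintro ⟨g, hg⟩ x hx
      set g₁ : X → ℝ := fun x => if 1/2 < f x then 1 else 0 with hg₁def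
      have hclopen1 : IsClopen {x : X | 1/2 < f x} := by
        constructor
        · exact isClosed_pre_Ioi hf hfin _
        · exact isOpen_Ioi.preimage hf
      have hg₁cont : Continuous g₁ := by
        apply Continuous.if _ continuous_const continuous_const
        intro a ha
        rw [hclopen1.frontier_eq] at ha
        exact absurd ha (Set.notMem_empty a)
      have hg₁mem : g₁ ∈ S := by
        refine ⟨hg₁cont, ?_, ?_⟩
        · rintro y ⟨z, rfl⟩
          by_cases h : 1/2 < f z
          · simp only [hg₁def, if_pos h]; exact Set.mem_insert_of_mem _ rfl
          · simp only [hg₁def, if_neg h]; exact Set.mem_insert _ _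
        · intro z
          constructor
          · intro h
            have hz : ¬ 1/2 < f z := by intro hh; linarith
            simp only [hg₁def, if_neg hz]
            exact (hf01 z).1
          · intro h
            have hz : 1/2 < f z := by linarith
            simp only [hg₁def, if_pos hz]
            exact (hf01 z).2
      rw [hg] at hg₀mem hg₁mem
      have h01 : g₀ = g₁ := by
        rw [Set.mem_singleton_iff] at hg₀mem hg₁mem
        rw [hg₀mem, hg₁mem]
      have := congrFun h01 x
      simp only [hg₀def, hg₁def] at this
      rw [if_pos (by rw [hx]), if_neg (by rw [hx]; exact lt_irrefl _)] at this
      exact one_ne_zero this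
    · intro hne
      exact ⟨g₀, Set.eq_singleton_iff_unique_mem.mpr ⟨hg₀mem, fun g hg => huniq hne g hg⟩⟩
  refine ⟨⟨g₀, hg₀mem⟩, hIff, ?_⟩
  intro n hn hsing
  have hne := hIff.mp hsing
  have hfix : ∀ x, sigmaStar (sigmaStar^[n] (f x)) = sigmaStar^[n] (f x) := by
    intro x
    have := congrFun hn.1 x
    simpa [Function.comp, Function.iterate_succ_apply'] using this
  have heq : (sigmaStar^[n] ∘ f) = g₀ := by
    funext x
    show sigmaStar^[n] (f x) = g₀ x
    rcases lt_or_gt_of_ne (hne x) with h | h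
    · have h1 : sigmaStar^[n] (f x) < 1/2 := iter_lt_half n h
      have hx : ¬ 1/2 ≤ f x := by linarith
      simp only [hg₀def, if_neg hx]
      rcases sigmaStar_fixed (hfix x) (ne_of_lt h1) with h0 | hone
      · exact h0
      · exfalso; rw [hone] at h1; linarith
    · have h1 : 1/2 < sigmaStar^[n] (f x) := half_lt_iter n h
      have hx : 1/2 ≤ f x := le_of_lt h
      simp only [hg₀def, if_pos hx]
      rcases sigmaStar_fixed (hfix x) (ne_of_gt h1) with h0 | hone
      · exfalso; rw [h0] at h1; linarith
      · exact hone
  obtain ⟨g, hg⟩ := hsing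
  rw [heq, hg]
  rw [hg] at hg₀mem
  rw [Set.mem_singleton_iff] at hg₀mem
  rw [hg₀mem]
end
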